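/- arXiv:0911.1272 — 2 statements merged into one kernel-verified Lean document; each statement's English description precedes it below -/
import Mathlib

section
/- For any ring R, every Gorenstein projective R-module with finite injective dimension is projective. -/
/-!
Write `G ≅ K⁰` with `Kⁱ = im dⁱ ⊆ Pⁱ⁺¹`. The sequences `0 → Kⁱ → Pⁱ⁺¹ → Kⁱ⁺¹ → 0` have projective
middle terms, so if `id M ≤ n` then dimension shifting gives
`Ext¹(Kⁱ⁺¹, M) ≅ Ext¹⁺ⁿ(Kⁱ⁺ⁿ⁺¹, M) = 0`. For `M = G` this splits `G ↪ P¹`, so `G` is a direct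
summand of a projective module. The vanishing of `Ext¹(Kⁱ⁺¹, M)` is encoded as "every map
`Kⁱ → M` extends to `Pⁱ⁺¹`" and the shift runs along an injective coresolution of `M`.
-/
universe u

open CategoryTheory

/-- `extVanish R n M N` asserts that `Ext_R^n(M, N) = 0`. -/
def extVanish (R : Type u) [Ring R] (n : ℕ) (M N : ModuleCat.{u} R) : Prop :=
  letI := HasDerivedCategory.standard (ModuleCat.{u} R)
  letI : HasExt.{u + 1} (ModuleCat.{u} R) := hasExt_of_hasDerivedCategory _
  Subsingleton (Abelian.Ext M N n)

/-- A module `G` is Gorenstein projective if there is an exact sequence of projective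
modules `⋯ → P i → P (i+1) → ⋯` with `G ≅ Im (d 0)` which stays exact after applying
`Hom_R(−, Q)` for every projective module `Q`. -/
def IsGorensteinProjective (R : Type u) [Ring R] (G : ModuleCat.{u} R) : Prop :=
  ∃ (P : ℤ → ModuleCat.{u} R) (d : ∀ i : ℤ, P i →ₗ[R] P (i + 1)),
    (∀ i, Module.Projective R (P i)) ∧
    (∀ i, LinearMap.range (d i) = LinearMap.ker (d (i + 1))) ∧
    Nonempty (G ≃ₗ[R] LinearMap.range (d 0)) ∧
    ∀ (Q : ModuleCat.{u} R), Module.Projective R Q →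
      ∀ (i : ℤ) (f : P (i + 1) →ₗ[R] Q), f ∘ₗ d i = 0 →
        ∃ g : P (i + 1 + 1) →ₗ[R] Q, g ∘ₗ d (i + 1) = f

/-- A module `G` is Gorenstein injective if there is an exact sequence of injective
modules `⋯ → I i → I (i+1) → ⋯` with `G ≅ Im (d 0)` which stays exact after applying
`Hom_R(E, −)` for every injective module `E`. -/
def IsGorensteinInjective (R : Type u) [Ring R] (G : ModuleCat.{u} R) : Prop :=
  ∃ (I : ℤ → ModuleCat.{u} R) (d : ∀ i : ℤ, I i →ₗ[R] I (i + 1)),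
    (∀ i, Module.Injective R (I i)) ∧
    (∀ i, LinearMap.range (d i) = LinearMap.ker (d (i + 1))) ∧
    Nonempty (G ≃ₗ[R] LinearMap.range (d 0)) ∧
    ∀ (E : ModuleCat.{u} R), Module.Injective R E →
      ∀ (i : ℤ) (f : E →ₗ[R] I (i + 1)), d (i + 1) ∘ₗ f = 0 →
        ∃ g : E →ₗ[R] I i, d i ∘ₗ g = f

/-- `projDimLE R n M` means that `M` admits a projective resolution of length at most `n`,
i.e. the projective dimension of `M` is at most `n`. -/
def projDimLE (R : Type u) [Ring R] : ℕ → ModuleCat.{u} R → Prop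
  | 0, M => Module.Projective R M
  | n + 1, M => ∃ (K P : ModuleCat.{u} R) (f : K →ₗ[R] P) (g : P →ₗ[R] M),
      Module.Projective R P ∧ Function.Injective f ∧ Function.Surjective g ∧
      LinearMap.range f = LinearMap.ker g ∧ projDimLE R n K

/-- `injDimLE R n M` means that `M` admits an injective resolution of length at most `n`,
i.e. the injective dimension of `M` is at most `n`. -/
def injDimLE (R : Type u) [Ring R] : ℕ → ModuleCat.{u} R → Prop
  | 0, M => Module.Injective R M
  | n + 1, M => ∃ (I C : ModuleCat.{u} R) (f : M →ₗ[R] I) (g : I →ₗ[R] C),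
      Module.Injective R I ∧ Function.Injective f ∧ Function.Surjective g ∧
      LinearMap.range f = LinearMap.ker g ∧ injDimLE R n C

section ExtendsAlong

variable {R : Type*} [Ring R] {K P L P' M I C : Type*}
  [AddCommGroup K] [Module R K] [AddCommGroup P] [Module R P] [AddCommGroup L] [Module R L]
  [AddCommGroup P'] [Module R P'] [AddCommGroup M] [Module R M] [AddCommGroup I] [Module R I]
  [AddCommGroup C] [Module R C]

def ExtendsAlong (j : K →ₗ[R] P) (M : Type*) [AddCommGroup M] [Module R M] : Prop :=
  ∀ φ : K →ₗ[R] M, ∃ ψ : P →ₗ[R] M, ψ ∘ₗ j = φ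

lemma Function.Exact.exists_comp_eq_of_surjective {f : K →ₗ[R] P} {g : P →ₗ[R] L}
    (hfg : Function.Exact f g) (hg : Function.Surjective g) (h : P →ₗ[R] C) (hh : h ∘ₗ f = 0) :
    ∃ k : L →ₗ[R] C, k ∘ₗ g = h := by
  refine ⟨(LinearMap.range f).liftQ h ?_ ∘ₗ (hfg.linearEquivOfSurjective hg).symm.toLinearMap, ?_⟩
  · rintro _ ⟨x, rfl⟩
    exact LinearMap.congr_fun hh x
  · ext x
    simp

lemma Function.Exact.exists_comp_eq_of_injective {f : M →ₗ[R] I} {g : I →ₗ[R] C}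
    (hfg : Function.Exact f g) (hf : Function.Injective f) (u : P →ₗ[R] I) (hu : g ∘ₗ u = 0) :
    ∃ h : P →ₗ[R] M, f ∘ₗ h = u := by
  have hu_mem : ∀ x, u x ∈ LinearMap.range f := fun x => (hfg (u x)).mp (LinearMap.congr_fun hu x)
  refine ⟨(LinearEquiv.ofInjective f hf).symm.toLinearMap ∘ₗ
    LinearMap.codRestrict (LinearMap.range f) u hu_mem, ?_⟩
  ext x
  simp

lemma ExtendsAlong.of_exact [Module.Projective R P'] {ι : K →ₗ[R] P} {π : P →ₗ[R] L}
    {j : L →ₗ[R] P'} {f : M →ₗ[R] I} {g : I →ₗ[R] C}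
    (hιπ : Function.Exact ι π) (hπ : Function.Surjective π)
    (hfg : Function.Exact f g) (hf : Function.Injective f) (hg : Function.Surjective g)
    (hI : ExtendsAlong ι I) (hC : ExtendsAlong j C) : ExtendsAlong ι M := by
  intro φ
  obtain ⟨ψ, hψ⟩ := hI (f ∘ₗ φ)
  obtain ⟨χ, hχ⟩ := hιπ.exists_comp_eq_of_surjective hπ (g ∘ₗ ψ) (by
    rw [LinearMap.comp_assoc, hψ, ← LinearMap.comp_assoc, hfg.linearMap_comp_eq_zero,
      LinearMap.zero_comp])
  obtain ⟨θ, hθ⟩ := hC χ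
  obtain ⟨θ', hθ'⟩ := Module.projective_lifting_property g θ hg
  -- Correcting `ψ` by `θ' ∘ j ∘ π`, which vanishes on `K`, makes it land in `ker g = range f`.
  obtain ⟨h, hh⟩ := hfg.exists_comp_eq_of_injective hf (ψ - θ' ∘ₗ j ∘ₗ π) (by
    rw [LinearMap.comp_sub, ← LinearMap.comp_assoc, hθ', ← LinearMap.comp_assoc, hθ, hχ,
      sub_self])
  refine ⟨h, LinearMap.ext fun x => hf ?_⟩
  have hιx := LinearMap.congr_fun hh (ι x)
  have hπι : π (ι x) = 0 := hιπ.apply_apply_eq_zero x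
  have hψx : ψ (ι x) = f (φ x) := LinearMap.congr_fun hψ x
  simpa [hπι, hψx] using hιx

lemma ExtendsAlong.of_linearEquiv {j : K →ₗ[R] P} (h : ExtendsAlong j M) (e : M ≃ₗ[R] C) :
    ExtendsAlong j C := fun φ => by
  obtain ⟨ψ, hψ⟩ := h (e.symm.toLinearMap ∘ₗ φ)
  refine ⟨e.toLinearMap ∘ₗ ψ, ?_⟩
  rw [LinearMap.comp_assoc, hψ, ← LinearMap.comp_assoc, e.comp_symm, LinearMap.id_comp]

lemma Module.Projective.of_extendsAlong_self [Module.Projective R P] {j : K →ₗ[R] P}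
    (h : ExtendsAlong j K) : Module.Projective R K := by
  obtain ⟨s, hs⟩ := h LinearMap.id
  exact .of_split j s hs

end ExtendsAlong

lemma Module.Injective.extendsAlong {R : Type*} [Ring R] {K P M : Type u}
    [AddCommGroup K] [Module R K] [AddCommGroup P] [Module R P] [AddCommGroup M] [Module R M]
    [Module.Injective R M] {j : K →ₗ[R] P} (hj : Function.Injective j) : ExtendsAlong j M :=
  fun φ => by
    obtain ⟨ψ, hψ⟩ := Module.Injective.out j hj φ
    exact ⟨ψ, LinearMap.ext hψ⟩

section ExactComplex

variable {R : Type u} [Ring R] {P : ℤ → ModuleCat.{u} R} {d : ∀ i : ℤ, P i →ₗ[R] P (i + 1)}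

lemma exact_subtype_range_rangeRestrict
    (hex : ∀ i, LinearMap.range (d i) = LinearMap.ker (d (i + 1))) (i : ℤ) :
    Function.Exact (LinearMap.range (d i)).subtype (d (i + 1)).rangeRestrict := by
  rw [LinearMap.exact_iff, LinearMap.ker_rangeRestrict, Submodule.range_subtype, hex]

lemma extendsAlong_range_subtype_of_injDimLE (hproj : ∀ i, Module.Projective R (P i))
    (hex : ∀ i, LinearMap.range (d i) = LinearMap.ker (d (i + 1))) {n : ℕ} {M : ModuleCat.{u} R}
    (hM : injDimLE R n M) (i : ℤ) : ExtendsAlong (LinearMap.range (d i)).subtype M := by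
  induction n generalizing M i with
  | zero =>
    have : Module.Injective R M := hM
    exact Module.Injective.extendsAlong Subtype.coe_injective
  | succ n ih =>
    obtain ⟨I, C, f, g, hI, hf, hg, hfg, hC⟩ := hM
    have := hproj (i + 1 + 1)
    exact ExtendsAlong.of_exact (exact_subtype_range_rangeRestrict hex i)
      (d (i + 1)).surjective_rangeRestrict (LinearMap.exact_iff.mpr hfg.symm) hf hg
      (Module.Injective.extendsAlong Subtype.coe_injective) (ih hC (i + 1))

end ExactComplex

/-- Every Gorenstein projective module with finite injective dimension is projective. -/
theorem projective_of_gorensteinProjective_of_finite_injDim (R : Type u) [Ring R]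
    (G : ModuleCat.{u} R) (hG : IsGorensteinProjective R G)
    (hfin : ∃ n : ℕ, injDimLE R n G) :
    Module.Projective R G := by
  obtain ⟨P, d, hproj, hex, ⟨e⟩, -⟩ := hG
  obtain ⟨n, hn⟩ := hfin
  have := hproj (0 + 1)
  have hext : ExtendsAlong (LinearMap.range (d 0)).subtype (LinearMap.range (d 0)) :=
    (extendsAlong_range_subtype_of_injDimLE hproj hex hn 0).of_linearEquiv e
  have := Module.Projective.of_extendsAlong_self hext
  exact .of_equiv' e.symm
end

section
/- For any ring R, every Gorenstein injective R-module with finite projective dimension is injective. -/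
/-! Let `K₀ = ker (I₀ → I₁)`, so that `0 → K₀ → I₀ → G → 0` is exact and, further left,
`⋯ → I₋₂ → I₋₁ → K₀ → 0` is exact with injective terms and kernels `K₁, K₂, …`. Dimension
shifting in both variables gives `Ext¹(M, A) ≅ Ext¹(ΩM, A')` when `ΩM` is a syzygy of `M` over a
projective module and `A'` one of `A` over an injective module, so `Ext¹(G, K₀) ≅ Ext¹(ΩⁿG, Kₙ) = 0`
once `pd G ≤ n`. Hence `I₀ → G` splits and `G` is a direct summand of an injective module.
`Ext¹(M, A) = 0` is encoded as `ExtensionsSplit R M A`: every extension of `M` by `A` splits. -/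

universe u

open CategoryTheory

open Function (Injective Surjective Exact)
open LinearMap

def ExtensionsSplit (R : Type u) [Ring R] (M A : Type u) [AddCommGroup M] [Module R M]
    [AddCommGroup A] [Module R A] : Prop :=
  ∀ (B : Type u) [AddCommGroup B] [Module R B] (f : A →ₗ[R] B) (g : B →ₗ[R] M),
    Injective f → Surjective g → Exact f g → ∃ s : M →ₗ[R] B, g ∘ₗ s = LinearMap.id

section

variable {R : Type u} [Ring R]

variable {K P M A' E A B X : Type u} [AddCommGroup K] [Module R K] [AddCommGroup P] [Module R P]
  [AddCommGroup M] [Module R M] [AddCommGroup A'] [Module R A'] [AddCommGroup E] [Module R E]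
  [AddCommGroup A] [Module R A] [AddCommGroup B] [Module R B] [AddCommGroup X] [Module R X]

theorem Function.Exact.exists_lift_of_comp_eq_zero {f : A →ₗ[R] B} {g : B →ₗ[R] M}
    (hfg : Exact f g) (hf : Injective f) (h : X →ₗ[R] B) (hh : g ∘ₗ h = 0) :
    ∃ φ : X →ₗ[R] A, f ∘ₗ φ = h := by
  have hmem (x : X) : h x ∈ range f := (hfg (h x)).mp (congr($hh x))
  refine ⟨(LinearEquiv.ofInjective f hf).symm ∘ₗ h.codRestrict _ hmem, ?_⟩
  ext x
  exact congr_arg Subtype.val ((LinearEquiv.ofInjective f hf).apply_symm_apply ⟨h x, hmem x⟩)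

theorem Function.Exact.exists_desc_of_comp_eq_zero {i : K →ₗ[R] P} {p : P →ₗ[R] M}
    (hip : Exact i p) (hp : Surjective p) (q : P →ₗ[R] B) (hq : q ∘ₗ i = 0) :
    ∃ s : M →ₗ[R] B, s ∘ₗ p = q := by
  refine ⟨(range i).liftQ q ?_ ∘ₗ (hip.linearEquivOfSurjective hp).symm, ?_⟩
  · rintro _ ⟨k, rfl⟩
    exact congr($hq k)
  · ext x
    simp

theorem Module.Injective.of_retract [Module.Injective R E] (s : M →ₗ[R] E) (p : E →ₗ[R] M)
    (hps : p ∘ₗ s = LinearMap.id) : Module.Injective R M where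
  out X Y _ _ _ _ i hi φ := by
    obtain ⟨ψ, hψ⟩ := Module.Injective.extension_property R E X Y i hi (s ∘ₗ φ)
    exact ⟨p ∘ₗ ψ, fun x => congr(p ($hψ x)).trans congr($hps (φ x))⟩

theorem extensionsSplit_of_projective [Module.Projective R M] : ExtensionsSplit R M A := by
  unfold ExtensionsSplit
  exact fun _ _ _ _ g _ hg _ => Module.projective_lifting_property g LinearMap.id hg

theorem ExtensionsSplit.exists_lift (hK : ExtensionsSplit R K A') {j : A' →ₗ[R] E}
    {π : E →ₗ[R] A} (hj : Injective j) (hπ : Surjective π) (hjπ : Exact j π) (φ : K →ₗ[R] A) :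
    ∃ ψ : K →ₗ[R] E, π ∘ₗ ψ = φ := by
  -- the pullback of `π` along `φ`, an extension of `K` by `A'`
  let Q := (π ∘ₗ fst R E K).eqLocus (φ ∘ₗ snd R E K)
  have hQ (e : E) (k : K) : (e, k) ∈ Q ↔ π e = φ k := mem_eqLocus
  let ι : A' →ₗ[R] Q := (inl R E K ∘ₗ j).codRestrict Q fun a => by
    simp [hQ, hjπ.apply_apply_eq_zero]
  let ρ : Q →ₗ[R] K := snd R E K ∘ₗ Q.subtype
  have hι : Injective ι := fun a b hab => hj congr(($hab : E × K).1)
  have hρ : Surjective ρ := fun k => by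
    obtain ⟨e, he⟩ := hπ (φ k)
    exact ⟨⟨(e, k), (hQ e k).mpr he⟩, rfl⟩
  have hιρ : Exact ι ρ := by
    rintro ⟨⟨e, k⟩, hek⟩
    change k = 0 ↔ _
    constructor
    · rintro rfl
      obtain ⟨a, rfl⟩ := (hjπ e).mp (by simpa using (hQ e 0).mp hek)
      exact ⟨a, rfl⟩
    · rintro ⟨a, ha⟩
      exact congr(($ha.symm : E × K).2)
  obtain ⟨s, hs⟩ := hK Q ι ρ hι hρ hιρ
  refine ⟨fst R E K ∘ₗ Q.subtype ∘ₗ s, LinearMap.ext fun k =>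
    (mem_eqLocus.mp (s k).2).trans congr(φ ($hs k))⟩

theorem extensionsSplit_of_forall_exists_extend [Module.Projective R P] {i : K →ₗ[R] P}
    {p : P →ₗ[R] M} (hp : Surjective p) (hip : Exact i p)
    (hext : ∀ φ : K →ₗ[R] A, ∃ ψ : P →ₗ[R] A, ψ ∘ₗ i = φ) : ExtensionsSplit R M A := by
  unfold ExtensionsSplit
  intro B _ _ f g hf hg hfg
  obtain ⟨q, hq⟩ := Module.projective_lifting_property g p hg
  obtain ⟨φ, hφ⟩ := hfg.exists_lift_of_comp_eq_zero hf (q ∘ₗ i) (by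
    rw [← comp_assoc, hq, hip.linearMap_comp_eq_zero])
  obtain ⟨ψ, hψ⟩ := hext φ
  obtain ⟨s, hs⟩ := hip.exists_desc_of_comp_eq_zero hp (q - f ∘ₗ ψ) (by
    rw [sub_comp, comp_assoc, hψ, hφ, sub_self])
  refine ⟨s, (cancel_right hp).mp ?_⟩
  rw [comp_assoc, hs, comp_sub, hq, ← comp_assoc, hfg.linearMap_comp_eq_zero, zero_comp, sub_zero,
    id_comp]

theorem ExtensionsSplit.of_syzygies [Module.Projective R P] [Module.Injective R E]
    (hK : ExtensionsSplit R K A') {i : K →ₗ[R] P} {p : P →ₗ[R] M} (hi : Injective i)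
    (hp : Surjective p) (hip : Exact i p) {j : A' →ₗ[R] E} {π : E →ₗ[R] A} (hj : Injective j)
    (hπ : Surjective π) (hjπ : Exact j π) : ExtensionsSplit R M A := by
  refine extensionsSplit_of_forall_exists_extend hp hip fun φ => ?_
  obtain ⟨ψ, hψ⟩ := hK.exists_lift hj hπ hjπ φ
  obtain ⟨Ψ, hΨ⟩ := Module.Injective.extension_property R E K P i hi ψ
  exact ⟨π ∘ₗ Ψ, by rw [comp_assoc, hΨ, hψ]⟩

def InjectiveSyzygies (A : ℕ → ModuleCat.{u} R) : Prop :=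
  ∀ n, ∃ (E : ModuleCat.{u} R) (j : A (n + 1) →ₗ[R] E) (π : E →ₗ[R] A n),
    Module.Injective R E ∧ Injective j ∧ Surjective π ∧ Exact j π

theorem extensionsSplit_of_projDimLE {n : ℕ} {M : ModuleCat.{u} R} (hM : projDimLE R n M)
    {A : ℕ → ModuleCat.{u} R} (hA : InjectiveSyzygies A) : ExtensionsSplit R M (A 0) := by
  induction n generalizing M A with
  | zero =>
    have : Module.Projective R M := hM
    exact extensionsSplit_of_projective
  | succ n ih =>
    obtain ⟨K, P, i, p, hP, hi, hp, hip, hK⟩ := hM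
    obtain ⟨E, j, π, hE, hj, hπ, hjπ⟩ := hA 0
    exact (ih hK (A := fun n => A (n + 1)) fun n => hA (n + 1)).of_syzygies hi hp
      (exact_iff.mpr hip.symm) hj hπ hjπ

theorem exact_subtype_ker_rangeRestrict {N P : Type u} [AddCommGroup N] [Module R N]
    [AddCommGroup P] [Module R P] (g : N →ₗ[R] P) :
    Exact (ker g).subtype g.rangeRestrict :=
  (range g).injective_subtype.comp_exact_iff_exact.mp (exact_subtype_ker_map g)

variable {I : ℤ → ModuleCat.{u} R} {d : ∀ i, I i →ₗ[R] I (i + 1)}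

theorem exists_surjective_exact_subtype_ker (hd : ∀ i, range (d i) = ker (d (i + 1)))
    {i k : ℤ} (hik : i + 1 = k) :
    ∃ π : I i →ₗ[R] ker (d k), Surjective π ∧ Exact (ker (d i)).subtype π := by
  subst hik
  exact ⟨(LinearEquiv.ofEq _ _ (hd i)).toLinearMap ∘ₗ (d i).rangeRestrict,
    (LinearEquiv.ofEq _ _ (hd i)).surjective.comp (d i).surjective_rangeRestrict,
    LinearEquiv.postcomp_exact_iff_exact.mpr (exact_subtype_ker_rangeRestrict (d i))⟩

theorem injectiveSyzygies_ker (hI : ∀ i, Module.Injective R (I i))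
    (hd : ∀ i, range (d i) = ker (d (i + 1))) :
    InjectiveSyzygies fun n : ℕ => ModuleCat.of R (ker (d (-n))) := by
  intro n
  obtain ⟨π, hπ, hexact⟩ :=
    exists_surjective_exact_subtype_ker hd (i := -(n + 1 : ℕ)) (k := -n) (by omega)
  exact ⟨I _, (ker (d _)).subtype, π, hI _, (ker (d _)).injective_subtype, hπ, hexact⟩

end

/-- Every Gorenstein injective module with finite projective dimension is injective. -/
theorem injective_of_gorensteinInjective_of_finite_projDim (R : Type u) [Ring R]
    (G : ModuleCat.{u} R) (hG : IsGorensteinInjective R G)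
    (hfin : ∃ n : ℕ, projDimLE R n G) :
    Module.Injective R G := by
  obtain ⟨I, d, hI, hd, ⟨e⟩, -⟩ := hG
  obtain ⟨n, hn⟩ := hfin
  have hsplit : ExtensionsSplit R G (ker (d 0)) :=
    extensionsSplit_of_projDimLE hn (injectiveSyzygies_ker hI hd)
  obtain ⟨s, hs⟩ := hsplit (I 0) (ker (d 0)).subtype (e.symm.toLinearMap ∘ₗ (d 0).rangeRestrict)
    (ker (d 0)).injective_subtype (e.symm.surjective.comp (d 0).surjective_rangeRestrict)
    (LinearEquiv.postcomp_exact_iff_exact.mpr (exact_subtype_ker_rangeRestrict (d 0)))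
  have := hI 0
  exact Module.Injective.of_retract s _ hs
end
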